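/- Let K₁, …, K_m be normed fields with multiplicative norms, each locally compact and not discrete, let A be a finitely generated abelian group with finite symmetric generating set T, and let λᵢ : A → Kᵢˣ be homomorphisms such that for every pair (i, j) there exists t ∈ T with ‖λᵢ(t)‖ < 1 and ‖λⱼ(t)‖ < 1. Let G = (K₁ × ⋯ × K_m) ⋊ A with a ∈ A acting by multiplying the i-th coordinate by λᵢ(a), and S = T ∪ ⋃ᵢ Bᵢ where Bᵢ = {x ∈ Kᵢ : ‖x‖ ≤ 1}. Fix a finite presentation of A over T with relator set R_A ⊆ F(T), and let R ⊆ F(S) consist of: the elements of R_A; all words t s t⁻¹ s'⁻¹ with t ∈ T, s, s' ∈ Bᵢ and λᵢ(t)·s = s'; all commutators [s, s'] with s ∈ Bᵢ, s' ∈ Bⱼ; and all words s s' s''⁻¹ with s, s', s'' ∈ Bᵢ and s + s' = s''. Then there exists a constant C such that for all n ≥ 1, all i, j, all words t, u over T of length ≤ n, and all v ∈ Bᵢ, w ∈ Bⱼ, the null-homotopic word [t v t⁻¹, u w u⁻¹] has R-area at most C·n². -/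

import Mathlib

open scoped BigOperators

namespace SolCT

variable {m : ℕ} (K : Fin m → Type) [∀ i, NormedField (K i)]
variable {A : Type} [CommGroup A] (lam : ∀ i, A →* (K i)ˣ)

/-- The multiplicative group structure that `AddAut M` carried in the older Mathlib
(`e₁ * e₂ = e₂.trans e₁`, `1 = refl`, `e⁻¹ = e.symm`). -/
instance addAutGroupOld (M : Type*) [Add M] : Group (AddAut M) where
  mul g h := AddEquiv.trans h g
  one := AddEquiv.refl _
  inv := AddEquiv.symm
  mul_assoc _ _ _ := rfl
  one_mul _ := rfl
  mul_one _ := rfl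
  inv_mul_cancel := AddEquiv.self_trans_symm

/-- The action of `A` on `⊕ᵢ Kᵢ`, multiplying the `i`-th coordinate by `λᵢ(a)`. -/
noncomputable def piAut : A →* AddAut (∀ i, K i) where
  toFun a := AddEquiv.piCongrRight fun i =>
    DistribMulAction.toAddAut (K i)ˣ (K i) (lam i a)
  map_one' := by
    refine AddEquiv.ext fun x => funext fun i => ?_
    show (lam i 1 : (K i)ˣ) • x i = x i
    simp
  map_mul' a b := by
    refine AddEquiv.ext fun x => funext fun i => ?_
    show (lam i (a * b) : (K i)ˣ) • x i = (lam i a : (K i)ˣ) • (lam i b : (K i)ˣ) • x i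
    simp [mul_smul]

/-- The action, as a homomorphism to `MulAut` of the multiplicative version. -/
noncomputable def phi : A →* MulAut (Multiplicative (∀ i, K i)) where
  toFun a := AddEquiv.toMultiplicative (piAut K lam a)
  map_one' := by
    refine MulEquiv.ext fun x => ?_
    show piAut K lam 1 (Multiplicative.toAdd x) = Multiplicative.toAdd x
    rw [map_one]; rfl
  map_mul' a b := by
    refine MulEquiv.ext fun x => ?_
    show piAut K lam (a * b) (Multiplicative.toAdd x) =
      piAut K lam a (piAut K lam b (Multiplicative.toAdd x))
    rw [map_mul]; rfl

/-- The group `G = (K₁ × ⋯ × K_m) ⋊ A`. -/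
noncomputable abbrev Grp : Type :=
  SemidirectProduct (Multiplicative (∀ i, K i)) A (phi K lam)

/-- The element of `G` given by `x ∈ Kᵢ` placed in the `i`-th coordinate. -/
noncomputable def bLetter (i : Fin m) (x : K i) : Grp K lam :=
  SemidirectProduct.inl (Multiplicative.ofAdd (Pi.single i x))

/-- The element of `G` given by `t ∈ A`. -/
noncomputable def tLetter (t : A) : Grp K lam :=
  SemidirectProduct.inr t

/-- The generating set `S = T ∪ ⋃ᵢ Bᵢ`. -/
noncomputable def genS (T : Set A) : Set (Grp K lam) :=
  (tLetter K lam '' T) ∪ ⋃ i, bLetter K lam i '' {x : K i | ‖x‖ ≤ 1}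

end SolCT

namespace DehnCT

variable {G : Type*} [Group G] (S : Set G)

/-- The canonical homomorphism `π : F(S) → G` from the free group on `S`. -/
noncomputable def pi : FreeGroup S →* G := FreeGroup.lift Subtype.val

/-- The reduced word length of an element of the free group. -/
noncomputable def len (w : FreeGroup S) : ℕ :=
  letI := Classical.decEq S
  w.norm

end DehnCT

namespace SolCT

variable {m : ℕ} (K : Fin m → Type) [∀ i, NormedField (K i)]
variable {A : Type} [CommGroup A] (lam : ∀ i, A →* (K i)ˣ)

/-- The letter of `F(S)` corresponding to `t ∈ T`. -/
noncomputable def ftl (T : Set A) (t : A) (ht : t ∈ T) : FreeGroup (genS K lam T) :=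
  FreeGroup.of ⟨tLetter K lam t, Or.inl ⟨t, ht, rfl⟩⟩

/-- The letter of `F(S)` corresponding to `x ∈ Bᵢ`. -/
noncomputable def fbl (T : Set A) (i : Fin m) (x : K i) (hx : ‖x‖ ≤ 1) :
    FreeGroup (genS K lam T) :=
  FreeGroup.of ⟨bLetter K lam i x, Or.inr (Set.mem_iUnion.2 ⟨i, ⟨x, hx, rfl⟩⟩)⟩

/-- The inclusion of the generators `T` of `A` into the generators `S` of `G`. -/
noncomputable def iotaTS (T : Set A) : T → genS K lam T :=
  fun t => ⟨tLetter K lam t.1, Or.inl ⟨t.1, t.2, rfl⟩⟩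

/-- The induced map `F(T) → F(S)` on free groups. -/
noncomputable def mapTS (T : Set A) : FreeGroup T →* FreeGroup (genS K lam T) :=
  FreeGroup.map (iotaTS K lam T)

/-- The set `R` of relators: the relators `R_A` of `A`, the conjugation relators
`t s t⁻¹ s'⁻¹`, the commutation relators `[s, s']`, and the addition relators
`s s' s''⁻¹`. -/
noncomputable def Rel (T : Set A) (RA : Set (FreeGroup T)) :
    Set (FreeGroup (genS K lam T)) :=
  (mapTS K lam T) '' RA ∪
  {w | ∃ (t : A) (ht : t ∈ T) (i : Fin m) (x x' : K i)
      (hx : ‖x‖ ≤ 1) (hx' : ‖x'‖ ≤ 1),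
      ((lam i t : (K i)ˣ) : K i) * x = x' ∧
      w = ftl K lam T t ht * fbl K lam T i x hx * (ftl K lam T t ht)⁻¹ *
        (fbl K lam T i x' hx')⁻¹} ∪
  {w | ∃ (i j : Fin m) (x : K i) (y : K j) (hx : ‖x‖ ≤ 1) (hy : ‖y‖ ≤ 1),
      w = fbl K lam T i x hx * fbl K lam T j y hy * (fbl K lam T i x hx)⁻¹ *
        (fbl K lam T j y hy)⁻¹} ∪
  {w | ∃ (i : Fin m) (x x' x'' : K i)
      (hx : ‖x‖ ≤ 1) (hx' : ‖x'‖ ≤ 1) (hx'' : ‖x''‖ ≤ 1),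
      x + x' = x'' ∧
      w = fbl K lam T i x hx * fbl K lam T i x' hx' * (fbl K lam T i x'' hx'')⁻¹}

end SolCT

open SolCT DehnCT

/-!
Fix `t₀ ∈ T` contracting both `Kᵢ` and `Kⱼ` and put `X = t₀ ^ N` with `N` proportional to `n`.
Conjugation by `X` turns `t v t⁻¹` into a single letter `x ∈ Bᵢ` at cost `O(n²)`: first commute `X`
past `t` inside `F(T)`, which costs `O(N n)` relators of `A` because any two letters of `T` commute
in `A` with bounded area; then push the letters of `t X` through `v` one at a time with the
conjugation relators. Read from the right, the coefficient is first contracted by `λᵢ(t₀)^N` and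
then expanded by at most `Mⁿ`, so it stays in the unit ball once `Mⁿ ‖λᵢ(t₀)‖^N ≤ 1`. The same `X`
works for `u w u⁻¹`, and `[X⁻¹ x X, X⁻¹ y X]` is a conjugate of a commutation relator.
-/

open scoped commutatorElement

namespace DehnCT

variable {G H : Type*} [Group G] [Group H] {R : Set G} {w w₁ w₂ x y : G} {k l N : ℕ}

def AreaLE (R : Set G) (w : G) (N : ℕ) : Prop :=
  ∃ L : List (G × G), L.length ≤ N ∧ (∀ p ∈ L, p.2 ∈ R ∨ p.2⁻¹ ∈ R) ∧
    w = (L.map fun p => p.1 * p.2 * p.1⁻¹).prod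

namespace AreaLE

theorem mono (h : AreaLE R w k) (hkN : k ≤ N) : AreaLE R w N :=
  let ⟨L, hL, hR, hw⟩ := h
  ⟨L, hL.trans hkN, hR, hw⟩

theorem one (N : ℕ) : AreaLE R 1 N := ⟨[], N.zero_le, by simp, rfl⟩

theorem of_mem (h : w ∈ R) : AreaLE R w 1 := ⟨[(1, w)], le_rfl, by simp [h], by simp⟩

theorem mul (h₁ : AreaLE R w₁ k) (h₂ : AreaLE R w₂ l) : AreaLE R (w₁ * w₂) (k + l) := by
  obtain ⟨L₁, hL₁, hR₁, rfl⟩ := h₁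
  obtain ⟨L₂, hL₂, hR₂, rfl⟩ := h₂
  refine ⟨L₁ ++ L₂, by simpa using add_le_add hL₁ hL₂, ?_, by simp⟩
  simpa only [List.mem_append] using fun p hp => hp.elim (hR₁ p) (hR₂ p)

theorem inv (h : AreaLE R w k) : AreaLE R w⁻¹ k := by
  obtain ⟨L, hL, hR, rfl⟩ := h
  refine ⟨(L.map fun p => (p.1, p.2⁻¹)).reverse, by simpa using hL, ?_, ?_⟩
  · simp only [List.mem_reverse, List.mem_map]
    rintro _ ⟨p, hp, rfl⟩
    simpa [or_comm] using hR p hp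
  · simp [List.prod_inv_reverse, Function.comp_def, mul_assoc]

theorem conj (g : G) (h : AreaLE R w k) : AreaLE R (g * w * g⁻¹) k := by
  obtain ⟨L, hL, hR, rfl⟩ := h
  refine ⟨L.map fun p => (g * p.1, p.2), by simpa using hL, ?_, ?_⟩
  · simp only [List.mem_map]
    rintro _ ⟨p, hp, rfl⟩
    exact hR p hp
  rw [← MulAut.conj_apply, map_list_prod]
  simp [Function.comp_def, mul_assoc]

theorem map (f : G →* H) {R' : Set H} (hR : f '' R ⊆ R') (h : AreaLE R w k) :
    AreaLE R' (f w) k := by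
  obtain ⟨L, hL, hRL, rfl⟩ := h
  refine ⟨L.map fun p => (f p.1, f p.2), by simpa using hL, ?_, ?_⟩
  · simp only [List.mem_map]
    rintro _ ⟨p, hp, rfl⟩
    refine (hRL p hp).imp (fun h => hR ⟨_, h, rfl⟩) fun h => ?_
    simpa using hR ⟨_, h, rfl⟩
  · simp [map_list_prod, Function.comp_def]

theorem commutator_prod_left {g : G} {as : List G} (h : ∀ a ∈ as, AreaLE R ⁅a, g⁆ k) :
    AreaLE R ⁅as.prod, g⁆ (as.length * k) := by
  induction as with
  | nil => simpa using one 0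
  | cons a as ih =>
    have hsplit : ⁅a * as.prod, g⁆ = a * ⁅as.prod, g⁆ * a⁻¹ * ⁅a, g⁆ := by
      simp only [commutatorElement_def]; group
    rw [List.prod_cons, hsplit, List.length_cons, Nat.succ_mul]
    exact ((ih fun b hb => h b (List.mem_cons_of_mem a hb)).conj a).mul (h a List.mem_cons_self)

theorem commutator_prod {as bs : List G} (h : ∀ a ∈ as, ∀ b ∈ bs, AreaLE R ⁅a, b⁆ k) :
    AreaLE R ⁅as.prod, bs.prod⁆ (as.length * (bs.length * k)) :=
  commutator_prod_left fun a ha => by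
    simpa only [commutatorElement_inv] using
      (commutator_prod_left fun b hb => by
        simpa only [commutatorElement_inv] using (h a ha b hb).inv).inv

end AreaLE

theorem exists_areaLE_of_mem_normalClosure (h : w ∈ Subgroup.normalClosure R) :
    ∃ k, AreaLE R w k := by
  let areaFinite : Subgroup G :=
    { carrier := {w | ∃ k, AreaLE R w k}
      one_mem' := ⟨0, AreaLE.one 0⟩
      mul_mem' := fun ⟨k, hk⟩ ⟨l, hl⟩ => ⟨k + l, hk.mul hl⟩
      inv_mem' := fun ⟨k, hk⟩ => ⟨k, hk.inv⟩ }
  have : areaFinite.Normal := ⟨fun _ ⟨k, hk⟩ g => ⟨k, hk.conj g⟩⟩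
  exact Subgroup.normalClosure_le_normal (N := areaFinite) (fun r hr => ⟨1, .of_mem hr⟩) h

def AreaEq (R : Set G) (x y : G) (N : ℕ) : Prop := AreaLE R (x * y⁻¹) N

namespace AreaEq

theorem mono (h : AreaEq R x y k) (hkN : k ≤ N) : AreaEq R x y N := AreaLE.mono h hkN

theorem refl (x : G) (N : ℕ) : AreaEq R x x N := by
  simpa [AreaEq] using AreaLE.one N

theorem symm (h : AreaEq R x y k) : AreaEq R y x k := by
  simpa [AreaEq] using AreaLE.inv h

theorem trans {z : G} (h₁ : AreaEq R x y k) (h₂ : AreaEq R y z l) : AreaEq R x z (k + l) := by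
  simpa [AreaEq, mul_assoc] using AreaLE.mul h₁ h₂

theorem conj (g : G) (h : AreaEq R x y k) : AreaEq R (g * x * g⁻¹) (g * y * g⁻¹) k := by
  simpa [AreaEq, mul_assoc] using AreaLE.conj g h

theorem mul {x' y' : G} (hx : AreaEq R x x' k) (hy : AreaEq R y y' l) :
    AreaEq R (x * y) (x' * y') (k + l) := by
  have := (AreaLE.conj x hy).mul hx
  rw [add_comm]
  simpa [AreaEq, mul_assoc] using this

theorem inv (h : AreaEq R x y k) : AreaEq R x⁻¹ y⁻¹ k := by
  simpa [AreaEq, mul_assoc] using h.symm.conj x⁻¹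

theorem commutator {x' y' : G} (hx : AreaEq R x x' k) (hy : AreaEq R y y' l) :
    AreaEq R ⁅x, y⁆ ⁅x', y'⁆ (k + l + k + l) := by
  simpa only [commutatorElement_def] using ((hx.mul hy).mul hx.inv).mul hy.inv

end AreaEq

theorem AreaLE.of_areaEq (h : AreaEq R x y k) (hy : AreaLE R y l) : AreaLE R x (k + l) := by
  simpa [mul_assoc] using AreaLE.mul h hy

variable {α : Type*}

theorem mk_eq_prod_map_mk_singleton (l : List (α × Bool)) :
    FreeGroup.mk l = (l.map fun x => FreeGroup.mk [x]).prod := by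
  induction l with
  | nil => rfl
  | cons x l ih => rw [List.map_cons, List.prod_cons, ← ih, FreeGroup.mul_mk, List.singleton_append]

theorem mk_replicate (s : α) (N : ℕ) :
    FreeGroup.mk (List.replicate N (s, true)) = FreeGroup.of s ^ N := by
  rw [mk_eq_prod_map_mk_singleton, List.map_replicate, List.prod_replicate]
  rfl

theorem AreaLE.commutator_mk {R : Set (FreeGroup α)} {c : ℕ}
    (hc : ∀ x y : α × Bool, AreaLE R ⁅FreeGroup.mk [x], FreeGroup.mk [y]⁆ c)
    (l₁ l₂ : List (α × Bool)) :
    AreaLE R ⁅FreeGroup.mk l₁, FreeGroup.mk l₂⁆ (l₁.length * (l₂.length * c)) := by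
  rw [mk_eq_prod_map_mk_singleton l₁, mk_eq_prod_map_mk_singleton l₂]
  simpa using AreaLE.commutator_prod (R := R) (k := c)
    (as := l₁.map fun x => FreeGroup.mk [x]) (bs := l₂.map fun x => FreeGroup.mk [x])
    (by simp only [List.mem_map]; rintro _ ⟨x, -, rfl⟩ _ ⟨y, -, rfl⟩; exact hc x y)

theorem exists_areaLE_commutator_mk_singleton [Finite α] {A : Type*} [CommGroup A]
    {f : FreeGroup α →* A} {R : Set (FreeGroup α)} (hR : f.ker = Subgroup.normalClosure R) :
    ∃ c, ∀ x y : α × Bool, AreaLE R ⁅FreeGroup.mk [x], FreeGroup.mk [y]⁆ c := by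
  have hmem (x y : α × Bool) : ∃ k, AreaLE R ⁅FreeGroup.mk [x], FreeGroup.mk [y]⁆ k :=
    exists_areaLE_of_mem_normalClosure <| hR ▸ by
      simp [MonoidHom.mem_ker, commutatorElement_eq_one_iff_mul_comm, mul_comm]
  choose k hk using hmem
  obtain ⟨c, hc⟩ := Finite.exists_le fun p : (α × Bool) × (α × Bool) => k p.1 p.2
  exact ⟨c, fun x y => (hk x y).mono (hc (x, y))⟩

theorem norm_coe_mk_le_pow_length {R : Type*} [NormedRing R] [NormOneClass R]
    (f : FreeGroup α →* Rˣ) {M : ℝ} {l : List (α × Bool)}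
    (hM : ∀ x ∈ l, ‖(f (FreeGroup.mk [x]) : R)‖ ≤ M) :
    ‖(f (FreeGroup.mk l) : R)‖ ≤ M ^ l.length := by
  induction l with
  | nil => simp [← FreeGroup.one_eq_mk]
  | cons x l ih =>
    have hx := hM x List.mem_cons_self
    rw [← List.singleton_append, ← FreeGroup.mul_mk, map_mul, Units.val_mul,
      List.singleton_append, List.length_cons, pow_succ']
    exact (norm_mul_le _ _).trans <| mul_le_mul hx (ih fun y hy => hM y (.tail x hy))
      (norm_nonneg _) ((norm_nonneg _).trans hx)

theorem exists_word_of_len_le {S : Set α} {t : FreeGroup S} {n : ℕ} (ht : len S t ≤ n) :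
    ∃ l : List (S × Bool), FreeGroup.mk l = t ∧ l.length ≤ n :=
  letI := Classical.decEq S
  ⟨t.toWord, FreeGroup.mk_toWord, ht⟩

end DehnCT

namespace SolCT

variable {m : ℕ} {K : Fin m → Type} [∀ i, NormedField (K i)] {A : Type} [CommGroup A]
  {lam : ∀ i, A →* (K i)ˣ} {T : Set A} {RA : Set (FreeGroup T)}

theorem _root_.DehnCT.AreaLE.mapTS {w : FreeGroup T} {k : ℕ} (h : AreaLE RA w k) :
    AreaLE (Rel K lam T RA) (mapTS K lam T w) k :=
  h.map _ fun _ hw => Or.inl (Or.inl (Or.inl hw))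

theorem commutator_fbl_mem_rel {i j : Fin m} {x : K i} {y : K j} (hx : ‖x‖ ≤ 1) (hy : ‖y‖ ≤ 1) :
    ⁅fbl K lam T i x hx, fbl K lam T j y hy⁆ ∈ Rel K lam T RA :=
  Or.inl (Or.inr ⟨i, j, x, y, hx, hy, rfl⟩)

theorem areaEq_conj_fbl_mk_singleton (x : T × Bool) {i : Fin m} {z z' : K i}
    (hz : ‖z‖ ≤ 1) (hz' : ‖z'‖ ≤ 1)
    (h : (lam i (pi T (FreeGroup.mk [x])) : K i) * z = z') :
    AreaEq (Rel K lam T RA)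
      (mapTS K lam T (FreeGroup.mk [x]) * fbl K lam T i z hz *
        (mapTS K lam T (FreeGroup.mk [x]))⁻¹)
      (fbl K lam T i z' hz') 1 := by
  obtain ⟨s, _ | _⟩ := x
  · have hs : (lam i s : K i) * z' = z := by
      rw [← h, ← mul_assoc, ← Units.val_mul, ← map_mul]
      simp [pi, FreeGroup.lift_mk]
    have hrel : ftl K lam T s s.2 * fbl K lam T i z' hz' * (ftl K lam T s s.2)⁻¹ *
        (fbl K lam T i z hz)⁻¹ ∈ Rel K lam T RA :=
      Or.inl (Or.inl (Or.inr ⟨s, s.2, i, z', z, hz', hz, hs, rfl⟩))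
    have := (AreaLE.of_mem hrel).inv.conj (ftl K lam T s s.2)⁻¹
    change AreaLE _ ((ftl K lam T s s.2)⁻¹ * _ * (ftl K lam T s s.2)⁻¹⁻¹ * _) 1
    convert this using 1
    group
  · have hs : (lam i s : K i) * z = z' := by simpa [pi, FreeGroup.lift_mk] using h
    exact AreaLE.of_mem (Or.inl (Or.inl (Or.inr ⟨s, s.2, i, z, z', hz, hz', hs, rfl⟩)))

theorem exists_areaEq_conj_fbl_mk (i : Fin m) {M : ℝ} (l : List (T × Bool))
    (hM : ∀ x ∈ l, ‖(lam i (pi T (FreeGroup.mk [x])) : K i)‖ ≤ M)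
    {v : K i} (hv : ‖v‖ ≤ 1) (hMv : ∀ k ≤ l.length, M ^ k * ‖v‖ ≤ 1) :
    ∃ (v' : K i) (hv' : ‖v'‖ ≤ 1), v' = (lam i (pi T (FreeGroup.mk l)) : K i) * v ∧
      AreaEq (Rel K lam T RA)
        (mapTS K lam T (FreeGroup.mk l) * fbl K lam T i v hv * (mapTS K lam T (FreeGroup.mk l))⁻¹)
        (fbl K lam T i v' hv') l.length := by
  induction l with
  | nil =>
    refine ⟨v, hv, by simp [← FreeGroup.one_eq_mk], ?_⟩
    simpa [← FreeGroup.one_eq_mk] using AreaEq.refl (R := Rel K lam T RA) (fbl K lam T i v hv) 0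
  | cons x l ih =>
    obtain ⟨z, hz, rfl, hpush⟩ := ih (fun y hy => hM y (.tail x hy))
      fun k hk => hMv k (hk.trans (Nat.le_succ _))
    have hnorm : ‖(lam i (pi T (FreeGroup.mk (x :: l))) : K i) * v‖ ≤ 1 := by
      rw [norm_mul]
      refine le_trans ?_ (hMv _ le_rfl)
      gcongr
      exact norm_coe_mk_le_pow_length ((lam i).comp (pi T)) hM
    have hsplit : FreeGroup.mk (x :: l) = FreeGroup.mk [x] * FreeGroup.mk l := by
      rw [FreeGroup.mul_mk, List.singleton_append]
    refine ⟨_, hnorm, rfl, ?_⟩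
    have hstep := areaEq_conj_fbl_mk_singleton (RA := RA) x hz hnorm (by
      rw [hsplit, map_mul, map_mul, Units.val_mul, mul_assoc])
    have hι : mapTS K lam T (FreeGroup.mk (x :: l)) =
        mapTS K lam T (FreeGroup.mk [x]) * mapTS K lam T (FreeGroup.mk l) := by
      rw [hsplit, map_mul]
    rw [hι, List.length_cons]
    simpa only [mul_inv_rev, mul_assoc] using
      (hpush.conj (mapTS K lam T (FreeGroup.mk [x]))).trans hstep

theorem exists_areaEq_conj_fbl_conj_pow {i : Fin m} {M : ℝ} (hM1 : 1 ≤ M)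
    (hM : ∀ x : T × Bool, ‖(lam i (pi T (FreeGroup.mk [x])) : K i)‖ ≤ M)
    {c : ℕ} (hc : ∀ x y : T × Bool, AreaLE RA ⁅FreeGroup.mk [x], FreeGroup.mk [y]⁆ c)
    (s : T) (hs : ‖(lam i s : K i)‖ ≤ 1) {n N : ℕ} (hN : M ^ n * ‖(lam i s : K i)‖ ^ N ≤ 1)
    {l : List (T × Bool)} (hl : l.length ≤ n) {v : K i} (hv : ‖v‖ ≤ 1) :
    ∃ (x : K i) (hx : ‖x‖ ≤ 1), AreaEq (Rel K lam T RA)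
      (mapTS K lam T (FreeGroup.mk l) * fbl K lam T i v hv * (mapTS K lam T (FreeGroup.mk l))⁻¹)
      ((mapTS K lam T (FreeGroup.of s ^ N))⁻¹ * fbl K lam T i x hx *
        mapTS K lam T (FreeGroup.of s ^ N)) (N * (n * c) + N * (n * c) + N + n) := by
  rw [← mk_replicate]
  set X := mapTS K lam T (FreeGroup.mk (List.replicate N (s, true)))
  set t := mapTS K lam T (FreeGroup.mk l)
  have hletter : ‖(lam i (pi T (FreeGroup.mk [(s, true)])) : K i)‖ = ‖(lam i s : K i)‖ := by
    simp [pi, FreeGroup.lift_mk]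
  have hcomm : AreaEq (Rel K lam T RA) (X * t) (t * X) (N * (n * c)) := by
    have hXt : X * t * (t * X)⁻¹ = ⁅X, t⁆ := by rw [commutatorElement_def]; group
    have h := (AreaLE.commutator_mk hc (List.replicate N (s, true)) l).mapTS (K := K) (lam := lam)
    rw [map_commutatorElement, List.length_replicate] at h
    rw [AreaEq, hXt]
    exact h.mono (Nat.mul_le_mul_left _ (Nat.mul_le_mul_right _ hl))
  obtain ⟨v₁, hv₁, rfl, hX⟩ := exists_areaEq_conj_fbl_mk (K := K) (lam := lam) (RA := RA) i
    (List.replicate N (s, true)) (M := ‖(lam i s : K i)‖) (by simp [hletter]) hv fun k _ =>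
      mul_le_one₀ (pow_le_one₀ (norm_nonneg _) hs) (norm_nonneg _) hv
  have hv₁N : ‖(lam i (pi T (FreeGroup.mk (List.replicate N (s, true)))) : K i) * v‖ ≤
      ‖(lam i s : K i)‖ ^ N := by
    rw [norm_mul]
    refine mul_le_of_le_one_right (norm_nonneg _) hv |>.trans ?_
    simpa using norm_coe_mk_le_pow_length ((lam i).comp (pi T))
      (l := List.replicate N (s, true)) (by simp [hletter])
  obtain ⟨x, hx, -, ht⟩ := exists_areaEq_conj_fbl_mk (RA := RA) i l (fun y _ => hM y) hv₁
    fun k hk => (mul_le_mul (pow_le_pow_right₀ hM1 (hk.trans hl)) hv₁N (norm_nonneg _)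
      (by positivity)).trans hN
  refine ⟨x, hx, ?_⟩
  have hmove : AreaEq (Rel K lam T RA) (X * (t * fbl K lam T i v hv * t⁻¹) * X⁻¹)
      (t * (X * fbl K lam T i v hv * X⁻¹) * t⁻¹) (N * (n * c) + 0 + N * (n * c)) := by
    simpa only [mul_inv_rev, mul_assoc] using
      (hcomm.mul (AreaEq.refl (fbl K lam T i v hv) 0)).mul hcomm.inv
  simpa [mul_assoc] using (((hmove.trans (hX.conj t)).trans ht).conj X⁻¹).mono (by simpa using hl)

theorem exists_areaLE_commutator_conj_fbl {M : ℝ} (hM1 : 1 ≤ M)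
    (hM : ∀ i (x : T × Bool), ‖(lam i (pi T (FreeGroup.mk [x])) : K i)‖ ≤ M)
    {c : ℕ} (hc : ∀ x y : T × Bool, AreaLE RA ⁅FreeGroup.mk [x], FreeGroup.mk [y]⁆ c)
    {i j : Fin m} (s : T) (hsi : ‖(lam i s : K i)‖ < 1) (hsj : ‖(lam j s : K j)‖ < 1) :
    ∃ C : ℕ, ∀ n : ℕ, 1 ≤ n → ∀ (v : K i) (w : K j) (hv : ‖v‖ ≤ 1) (hw : ‖w‖ ≤ 1)
      (l₁ l₂ : List (T × Bool)), l₁.length ≤ n → l₂.length ≤ n →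
      AreaLE (Rel K lam T RA)
        ⁅mapTS K lam T (FreeGroup.mk l₁) * fbl K lam T i v hv * (mapTS K lam T (FreeGroup.mk l₁))⁻¹,
          mapTS K lam T (FreeGroup.mk l₂) * fbl K lam T j w hw *
            (mapTS K lam T (FreeGroup.mk l₂))⁻¹⁆ (C * n ^ 2) := by
  set ρ := max ‖(lam i s : K i)‖ ‖(lam j s : K j)‖
  obtain ⟨E, hE⟩ : ∃ E : ℕ, M * ρ ^ E ≤ 1 := by
    have hM0 : 0 < M := zero_lt_one.trans_le hM1
    obtain ⟨E, hE⟩ := exists_pow_lt_of_lt_one (inv_pos.2 hM0) (max_lt hsi hsj)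
    exact ⟨E, (mul_le_mul_of_nonneg_left hE.le hM0.le).trans_eq (mul_inv_cancel₀ hM0.ne')⟩
  have hN {k : Fin m} (hk : ‖(lam k s : K k)‖ ≤ ρ) (n : ℕ) :
      M ^ n * ‖(lam k s : K k)‖ ^ (E * n) ≤ 1 :=
    calc M ^ n * ‖(lam k s : K k)‖ ^ (E * n) ≤ M ^ n * ρ ^ (E * n) := by gcongr
      _ = (M * ρ ^ E) ^ n := by rw [pow_mul, mul_pow]
      _ ≤ 1 := pow_le_one₀ (by positivity) hE
  refine ⟨4 * (2 * E * c + E + 1) + 1, fun n hn v w hv hw l₁ l₂ hl₁ hl₂ => ?_⟩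
  obtain ⟨x, hx, hvx⟩ :=
    exists_areaEq_conj_fbl_conj_pow hM1 (hM i) hc s hsi.le (hN (le_max_left _ _) n) hl₁ hv
  obtain ⟨y, hy, hwy⟩ :=
    exists_areaEq_conj_fbl_conj_pow hM1 (hM j) hc s hsj.le (hN (le_max_right _ _) n) hl₂ hw
  set X := mapTS K lam T (FreeGroup.of s ^ (E * n))
  have hxy : AreaLE (Rel K lam T RA)
      ⁅X⁻¹ * fbl K lam T i x hx * X, X⁻¹ * fbl K lam T j y hy * X⁆ 1 := by
    simpa [commutatorElement_def, mul_assoc] using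
      (AreaLE.of_mem (commutator_fbl_mem_rel (RA := RA) hx hy)).conj X⁻¹
  refine (AreaLE.of_areaEq (hvx.commutator hwy) hxy).mono ?_
  have hn2 : n ≤ n ^ 2 := by nlinarith
  nlinarith [Nat.mul_le_mul_left E hn2]

end SolCT

theorem stmt9_general (m : ℕ) (K : Fin m → Type) [∀ i, NormedField (K i)]
    (A : Type) [CommGroup A]
    (T : Finset A)
    (lam : ∀ i, A →* (K i)ˣ)
    (hcontr : ∀ i j : Fin m, ∃ t ∈ T,
      ‖((lam i t : (K i)ˣ) : K i)‖ < 1 ∧ ‖((lam j t : (K j)ˣ) : K j)‖ < 1)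
    (RA : Set (FreeGroup (T : Set A)))
    (hpres : (FreeGroup.lift Subtype.val : FreeGroup (T : Set A) →* A).ker =
      Subgroup.normalClosure RA) :
    ∃ C : ℝ, ∀ n : ℕ, 1 ≤ n → ∀ (i j : Fin m) (v : K i) (w : K j)
      (hv : ‖v‖ ≤ 1) (hw : ‖w‖ ≤ 1) (t u : FreeGroup (T : Set A)),
      len (T : Set A) t ≤ n → len (T : Set A) u ≤ n →
      ∃ L : List (FreeGroup (genS K lam (T : Set A)) ×
          FreeGroup (genS K lam (T : Set A))),
        (L.length : ℝ) ≤ C * (n : ℝ) ^ 2 ∧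
        (∀ p ∈ L, p.2 ∈ Rel K lam (T : Set A) RA ∨
          p.2⁻¹ ∈ Rel K lam (T : Set A) RA) ∧
        (mapTS K lam (T : Set A) t * fbl K lam (T : Set A) i v hv *
              (mapTS K lam (T : Set A) t)⁻¹) *
            (mapTS K lam (T : Set A) u * fbl K lam (T : Set A) j w hw *
              (mapTS K lam (T : Set A) u)⁻¹) *
            (mapTS K lam (T : Set A) t * fbl K lam (T : Set A) i v hv *
              (mapTS K lam (T : Set A) t)⁻¹)⁻¹ *
            (mapTS K lam (T : Set A) u * fbl K lam (T : Set A) j w hw *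
              (mapTS K lam (T : Set A) u)⁻¹)⁻¹ =
          (L.map fun p => p.1 * p.2 * p.1⁻¹).prod := by
  obtain ⟨c, hc⟩ := exists_areaLE_commutator_mk_singleton hpres
  obtain ⟨M, hM⟩ := Finite.exists_le fun p : Fin m × (↥(T : Set A) × Bool) =>
    ‖(lam p.1 (pi (T : Set A) (FreeGroup.mk [p.2])) : K p.1)‖
  choose s hsT hs using hcontr
  have hpair (p : Fin m × Fin m) := exists_areaLE_commutator_conj_fbl (RA := RA)
    (le_max_right M 1) (fun i x => (hM (i, x)).trans (le_max_left M 1)) hc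
    ⟨s p.1 p.2, hsT p.1 p.2⟩ (hs p.1 p.2).1 (hs p.1 p.2).2
  choose C hC using hpair
  obtain ⟨C', hC'⟩ := Finite.exists_le C
  refine ⟨C', fun n hn i j v w hv hw t u ht hu => ?_⟩
  obtain ⟨l₁, rfl, hl₁⟩ := exists_word_of_len_le ht
  obtain ⟨l₂, rfl, hl₂⟩ := exists_word_of_len_le hu
  obtain ⟨L, hL, hLR, hLw⟩ :=
    (hC (i, j) n hn v w hv hw l₁ l₂ hl₁ hl₂).mono (Nat.mul_le_mul_right _ (hC' (i, j)))
  exact ⟨L, by exact_mod_cast hL, hLR, hLw⟩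

/-- Claim 2 in the proof of Theorem `meta` of Cornulier–Tessera:
the commutator `[t v t⁻¹, u w u⁻¹]` has `R`-area at most `C·n²`. -/
theorem stmt9 (m : ℕ) (K : Fin m → Type) [∀ i, NormedField (K i)]
    [∀ i, LocallyCompactSpace (K i)] (hnd : ∀ i, ¬ DiscreteTopology (K i))
    (A : Type) [CommGroup A]
    (T : Finset A) (hTsym : ∀ t ∈ T, t⁻¹ ∈ T)
    (hTgen : Subgroup.closure (T : Set A) = ⊤)
    (lam : ∀ i, A →* (K i)ˣ)
    (hcontr : ∀ i j : Fin m, ∃ t ∈ T,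
      ‖((lam i t : (K i)ˣ) : K i)‖ < 1 ∧ ‖((lam j t : (K j)ˣ) : K j)‖ < 1)
    (RA : Set (FreeGroup (T : Set A))) (hRAfin : RA.Finite)
    (hpres : (FreeGroup.lift Subtype.val : FreeGroup (T : Set A) →* A).ker =
      Subgroup.normalClosure RA) :
    ∃ C : ℝ, ∀ n : ℕ, 1 ≤ n → ∀ (i j : Fin m) (v : K i) (w : K j)
      (hv : ‖v‖ ≤ 1) (hw : ‖w‖ ≤ 1) (t u : FreeGroup (T : Set A)),
      len (T : Set A) t ≤ n → len (T : Set A) u ≤ n →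
      ∃ L : List (FreeGroup (genS K lam (T : Set A)) ×
          FreeGroup (genS K lam (T : Set A))),
        (L.length : ℝ) ≤ C * (n : ℝ) ^ 2 ∧
        (∀ p ∈ L, p.2 ∈ Rel K lam (T : Set A) RA ∨
          p.2⁻¹ ∈ Rel K lam (T : Set A) RA) ∧
        (mapTS K lam (T : Set A) t * fbl K lam (T : Set A) i v hv *
              (mapTS K lam (T : Set A) t)⁻¹) *
            (mapTS K lam (T : Set A) u * fbl K lam (T : Set A) j w hw *
              (mapTS K lam (T : Set A) u)⁻¹) *
            (mapTS K lam (T : Set A) t * fbl K lam (T : Set A) i v hv *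
              (mapTS K lam (T : Set A) t)⁻¹)⁻¹ *
            (mapTS K lam (T : Set A) u * fbl K lam (T : Set A) j w hw *
              (mapTS K lam (T : Set A) u)⁻¹)⁻¹ =
          (L.map fun p => p.1 * p.2 * p.1⁻¹).prod :=
  stmt9_general m K A T lam hcontr RA hpres
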